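/- arXiv:1901.08268 — 6 statements merged into one kernel-verified Lean document; each statement's English description precedes it below -/
import Mathlib

section
/- For α > 0 and β > -1, the left nabla fractional sum of the rising function satisfies (ₐ∇^{-α} (t-a)^{\overline{β}}) = (Γ(β+1)/Γ(β+1+α)) · (t-a)^{\overline{α+β}} for t ∈ ℕ_{a+1}. -/
/-!
For a positive base the rising function is a quotient of Gamma values, so
`(k+1)^{μ‾} = Γ(μ+1) · multichoose (μ+1) k`, where `multichoose r k = r(r+1)⋯(r+k-1)/k!`.
With `n = m + 1`, the fractional sum becomes `Γ(β+1)` times the convolution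
`∑_{i+l=m} multichoose α i · multichoose (β+1) l`, which by Chu–Vandermonde equals
`multichoose (α+β+1) m = n^{(α+β)‾} / Γ(α+β+1)`.
-/

noncomputable def rising (x mu : ℝ) : ℝ :=
  if mu = 0 then 1 else Real.Gamma (x + mu) / Real.Gamma x

/-- Left nabla fractional sum of order `mu` starting at `a`, for a function on
`ℕ_a` represented as a sequence `f : ℕ → ℝ` with `f j = f(a + j)`; the value is
taken at the point `z = a + n`. By convention the sum of order `0` is the identity. -/
noncomputable def nablaSumL (mu : ℝ) (f : ℕ → ℝ) (n : ℕ) : ℝ :=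
  if mu = 0 then f n
  else (1 / Real.Gamma mu) *
    ∑ j ∈ Finset.Icc 1 n, rising ((n : ℝ) - (j : ℝ) + 1) (mu - 1) * f j

/-- Right nabla fractional sum of order `mu` ending at `b`, for a function on
`_bℕ` represented as a sequence `g : ℕ → ℝ` with `g i = g(b - i)`; the value is
taken at the point `z = b - m`. -/
noncomputable def nablaSumR (mu : ℝ) (g : ℕ → ℝ) (m : ℕ) : ℝ :=
  if mu = 0 then g m
  else (1 / Real.Gamma mu) *
    ∑ i ∈ Finset.Icc 1 m, rising ((m : ℝ) - (i : ℝ) + 1) (mu - 1) * g i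

open Finset Polynomial

theorem Real.Gamma_add_nat_eq_ascPochhammer_mul {x : ℝ} (hx : 0 < x) (k : ℕ) :
    Real.Gamma (x + k) = (ascPochhammer ℝ k).eval x * Real.Gamma x := by
  induction k with
  | zero => simp
  | succ k ih =>
    rw [Nat.cast_succ, ← add_assoc, Real.Gamma_add_one (by positivity), ih,
      ascPochhammer_succ_eval]
    ring

theorem Real.Gamma_add_nat_eq_factorial_mul_multichoose_mul {x : ℝ} (hx : 0 < x) (k : ℕ) :
    Real.Gamma (x + k) = k.factorial * Ring.multichoose x k * Real.Gamma x := by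
  rw [Real.Gamma_add_nat_eq_ascPochhammer_mul hx, ← nsmul_eq_mul,
    Ring.factorial_nsmul_multichoose_eq_ascPochhammer, ascPochhammer_smeval_eq_eval]

theorem rising_of_pos {x : ℝ} (hx : 0 < x) (μ : ℝ) :
    rising x μ = Real.Gamma (x + μ) / Real.Gamma x := by
  unfold rising
  split_ifs with h
  · rw [h, add_zero, div_self (Real.Gamma_pos_of_pos hx).ne']
  · rfl

theorem rising_natCast_add_one {μ : ℝ} (hμ : -1 < μ) (k : ℕ) :
    rising (k + 1) μ = Real.Gamma (μ + 1) * Ring.multichoose (μ + 1) k := by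
  rw [rising_of_pos (by positivity), Real.Gamma_nat_eq_factorial,
    show (k : ℝ) + 1 + μ = μ + 1 + k by ring,
    Real.Gamma_add_nat_eq_factorial_mul_multichoose_mul (by linarith)]
  field_simp

-- Reduces to `Ring.add_choose_eq` through `choose (-r) k = (-1)^k • multichoose r k`.
theorem Ring.multichoose_add {R : Type*} [CommRing R] [BinomialRing R] (r s : R) (k : ℕ) :
    Ring.multichoose (r + s) k =
      ∑ ij ∈ antidiagonal k, Ring.multichoose r ij.1 * Ring.multichoose s ij.2 := by
  have h := Ring.add_choose_eq (r := -r) (s := -s) k (Commute.all _ _)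
  simp only [← neg_add, Ring.choose_neg', smul_mul_smul_comm] at h
  rw [← smul_left_cancel_iff ((k : ℤ).negOnePow), h, smul_sum]
  refine sum_congr rfl fun ij hij => ?_
  rw [← mem_antidiagonal.mp hij, Nat.cast_add, Int.negOnePow_add]

theorem sum_Icc_one_eq_sum_antidiagonal {M : Type*} [AddCommMonoid M] (f : ℕ → ℕ → M) (m : ℕ) :
    ∑ j ∈ Icc 1 (m + 1), f (m + 1 - j) (j - 1) = ∑ ij ∈ antidiagonal m, f ij.1 ij.2 := by
  rw [← Nat.sum_antidiagonal_swap]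
  simp only [Prod.fst_swap, Prod.snd_swap]
  rw [Nat.sum_antidiagonal_eq_sum_range_succ (fun i j => f j i),
    ← Ico_add_one_right_eq_Icc, sum_Ico_eq_sum_range]
  refine sum_congr (by simp) fun i _ => ?_
  congr 1 <;> omega

/-- Power rule for the left nabla fractional sum: for `α > 0`, `β > -1`, and
`t = a + n ∈ ℕ_{a+1}`, one has
`(ₐ∇^{-α}(·-a)^β‾)(t) = (Γ(β+1)/Γ(β+1+α)) (t-a)^(α+β)‾`.
The function `s ↦ (s-a)^β‾` on `ℕ_a` is the sequence `j ↦ j^β‾`, and `t - a = n`. -/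
theorem nablaSumL_rising (α β : ℝ) (hα : 0 < α) (hβ : -1 < β) (n : ℕ) (hn : 1 ≤ n) :
    nablaSumL α (fun j => rising (j : ℝ) β) n
      = (Real.Gamma (β + 1) / Real.Gamma (β + 1 + α)) * rising (n : ℝ) (α + β) := by
  obtain ⟨m, rfl⟩ : ∃ m, n = m + 1 := ⟨n - 1, by omega⟩
  have hterm : ∀ j ∈ Icc 1 (m + 1),
      rising ((m + 1 : ℕ) - j + 1) (α - 1) * rising j β = Real.Gamma α * Real.Gamma (β + 1) *
        (Ring.multichoose α (m + 1 - j) * Ring.multichoose (β + 1) (j - 1)) := by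
    intro j hj
    obtain ⟨hj1, hjn⟩ := mem_Icc.mp hj
    rw [show ((m + 1 : ℕ) : ℝ) - j + 1 = ((m + 1 - j : ℕ) : ℝ) + 1 by
        push_cast [Nat.cast_sub hjn]; ring,
      show (j : ℝ) = ((j - 1 : ℕ) : ℝ) + 1 by push_cast [Nat.cast_sub hj1]; ring,
      rising_natCast_add_one (by linarith), rising_natCast_add_one hβ, sub_add_cancel]
    ring
  have hΓα := (Real.Gamma_pos_of_pos hα).ne'
  have hΓαβ := (Real.Gamma_pos_of_pos (by linarith : 0 < β + 1 + α)).ne'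
  rw [nablaSumL, if_neg hα.ne', sum_congr rfl hterm, ← mul_sum,
    sum_Icc_one_eq_sum_antidiagonal (fun i l => Ring.multichoose α i * Ring.multichoose (β + 1) l),
    ← Ring.multichoose_add, Nat.cast_succ, rising_natCast_add_one (by linarith),
    show α + β + 1 = β + 1 + α by ring, add_comm α]
  field_simp
end

section
/- The left nabla fractional sums satisfy the semigroup property: for α, μ > 0 and any function f on ℕ_a, (ₐ∇^{-α}(ₐ∇^{-μ}f))(v) = (ₐ∇^{-(α+μ)}f)(v) for all v ∈ ℕ_{a+1}. -/
/-!
Writing `(n - j + 1)^{\overline{μ-1}} / Γ(μ) = Γ(n - j + μ) / (Γ(μ) (n - j)!)` as the multiset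
coefficient `multichoose μ (n - j) = (-1)^{n-j} choose (-μ) (n - j)`, the fractional sum becomes
convolution with the kernel `k ↦ multichoose μ k`. Composing two such sums convolves the kernels,
and Chu–Vandermonde for `choose` at `-α, -μ` turns the convolved kernel into `multichoose (α + μ)`.
-/

open Finset Polynomial

theorem Real.Gamma_add_nat_eq_ascPochhammer_mul_s4 {t : ℝ} (ht : ∀ m : ℕ, t ≠ -m) (n : ℕ) :
    Real.Gamma (t + n) = (ascPochhammer ℝ n).eval t * Real.Gamma t := by
  induction n with
  | zero => simp
  | succ n ih =>
    have htn : t + n ≠ 0 := fun h => ht n (by linarith)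
    rw [Nat.cast_succ, ← add_assoc, Real.Gamma_add_one htn, ih, ascPochhammer_succ_eval]
    ring

theorem Real.Gamma_add_nat_eq_factorial_mul_multichoose {t : ℝ} (ht : ∀ m : ℕ, t ≠ -m) (n : ℕ) :
    Real.Gamma (t + n) = n.factorial * Ring.multichoose t n * Real.Gamma t := by
  rw [Real.Gamma_add_nat_eq_ascPochhammer_mul_s4 ht, ← ascPochhammer_smeval_eq_eval,
    ← Ring.factorial_nsmul_multichoose_eq_ascPochhammer, nsmul_eq_mul]

theorem rising_eq_Gamma_div {x : ℝ} (hx : Real.Gamma x ≠ 0) (mu : ℝ) :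
    rising x mu = Real.Gamma (x + mu) / Real.Gamma x := by
  unfold rising
  split_ifs with h
  · rw [h, add_zero, div_self hx]
  · rfl

theorem rising_natCast_add_one_s4 {t : ℝ} (ht : ∀ m : ℕ, t ≠ -m) (n : ℕ) :
    rising (n + 1) (t - 1) = Real.Gamma t * Ring.multichoose t n := by
  have hn : Real.Gamma (n + 1) ≠ 0 := by
    rw [Real.Gamma_nat_eq_factorial]
    exact_mod_cast n.factorial_ne_zero
  rw [rising_eq_Gamma_div hn, show (n : ℝ) + 1 + (t - 1) = t + n by ring,
    Real.Gamma_add_nat_eq_factorial_mul_multichoose ht, Real.Gamma_nat_eq_factorial]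
  field_simp

theorem nablaSumL_eq_sum_multichoose {mu : ℝ} (hmu : ∀ m : ℕ, mu ≠ -m) (f : ℕ → ℝ) (n : ℕ) :
    nablaSumL mu f n = ∑ j ∈ Icc 1 n, Ring.multichoose mu (n - j) * f j := by
  have hmu0 : mu ≠ 0 := by simpa using hmu 0
  rw [nablaSumL, if_neg hmu0, mul_sum]
  refine sum_congr rfl fun j hj => ?_
  have hjn : j ≤ n := (mem_Icc.mp hj).2
  rw [show (n : ℝ) - j = ((n - j : ℕ) : ℝ) by push_cast [hjn]; ring, rising_natCast_add_one_s4 hmu]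
  field_simp [Real.Gamma_ne_zero hmu]

/-- Lower-triangular Toeplitz operators compose by convolving their kernels. -/
theorem sum_Icc_mul_sum_Icc_of_convolution {R : Type*} [CommSemiring R] {a b c : ℕ → R}
    (habc : ∀ m, ∑ ij ∈ antidiagonal m, a ij.1 * b ij.2 = c m) (f : ℕ → R) (l n : ℕ) :
    ∑ j ∈ Icc l n, a (n - j) * ∑ i ∈ Icc l j, b (j - i) * f i =
      ∑ i ∈ Icc l n, c (n - i) * f i := by
  simp_rw [mul_sum]
  rw [sum_comm' (t' := Icc l n) (s' := fun i => Icc i n) (by intro j i; simp only [mem_Icc]; omega)]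
  refine sum_congr rfl fun i hi => ?_
  have hin : i ≤ n := (mem_Icc.mp hi).2
  rw [← habc, sum_mul]
  refine sum_nbij' (fun j => (n - j, j - i)) (fun ij => i + ij.2) ?_ ?_ ?_ ?_ ?_ <;>
    simp only [mem_Icc, HasAntidiagonal.mem_antidiagonal, Prod.forall, Prod.mk.injEq, mul_assoc,
      implies_true] <;>
    omega

theorem nablaSumL_semigroup_general (α μ : ℝ) (hα : 0 < α) (hμ : 0 < μ) (f : ℕ → ℝ)
    (n : ℕ) :
    nablaSumL α (nablaSumL μ f) n = nablaSumL (α + μ) f n := by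
  have ne_neg_natCast {t : ℝ} (ht : 0 < t) (m : ℕ) : t ≠ -m :=
    ((neg_nonpos.mpr m.cast_nonneg).trans_lt ht).ne'
  simp only [nablaSumL_eq_sum_multichoose (ne_neg_natCast hα),
    nablaSumL_eq_sum_multichoose (ne_neg_natCast hμ),
    nablaSumL_eq_sum_multichoose (ne_neg_natCast (add_pos hα hμ))]
  exact sum_Icc_mul_sum_Icc_of_convolution (fun m => (Ring.multichoose_add α μ m).symm) f 1 n

/-- Semigroup property of the left nabla fractional sums: for `α, μ > 0` and any
function `f` on `ℕ_a`, `(ₐ∇^{-α}(ₐ∇^{-μ}f))(v) = (ₐ∇^{-(α+μ)}f)(v)` at every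
point `v = a + n ∈ ℕ_{a+1}`. -/
theorem nablaSumL_semigroup (α μ : ℝ) (hα : 0 < α) (hμ : 0 < μ) (f : ℕ → ℝ)
    (n : ℕ) (hn : 1 ≤ n) :
    nablaSumL α (nablaSumL μ f) n = nablaSumL (α + μ) f n :=
  nablaSumL_semigroup_general α μ hα hμ f n
end

section
/- For μ > 0 and complex z with |1-z| < 1, the nabla discrete Laplace transform of t^{\overline{μ-1}} equals Γ(μ)/z^μ, i.e., ∑_{t=1}^{∞} (1-z)^{t-1} · t^{\overline{μ-1}} = Γ(μ)/z^μ. -/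
/-! Since `Γ(μ + n) / n! = Γ(μ) · (μ + n - 1 choose n)`, the transform is `Γ(μ)` times the
binomial series `∑ (μ + n - 1 choose n) wⁿ = (1 - w)^(-μ)`, evaluated at `w = 1 - z`. -/

/-- The complex rising function `x^{\overline{μ}} = Γ(x+μ)/Γ(x)`. -/
noncomputable def crising (x mu : ℂ) : ℂ :=
  if mu = 0 then 1 else Complex.Gamma (x + mu) / Complex.Gamma x

open Complex Nat

theorem Complex.factorial_mul_choose_add_sub_one (a : ℂ) (n : ℕ) :
    n ! * Ring.choose (a + n - 1) n = (ascPochhammer ℂ n).eval a := by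
  rw [← Ring.multichoose_eq, ← nsmul_eq_mul, Ring.factorial_nsmul_multichoose_eq_ascPochhammer,
    Polynomial.ascPochhammer_smeval_eq_eval]

theorem Complex.Gamma_mul_choose_add_sub_one {a : ℂ} (ha : ∀ k : ℕ, a ≠ -k) (n : ℕ) :
    Gamma a * Ring.choose (a + n - 1) n = Gamma (a + n) / n ! := by
  rw [eq_div_iff (by exact_mod_cast n.factorial_ne_zero), mul_assoc, mul_comm _ (n ! : ℂ),
    factorial_mul_choose_add_sub_one, ← Gamma_add_nat_div_Gamma_eq a ha,
    mul_div_cancel₀ _ (Gamma_ne_zero ha)]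

theorem crising_nat_add_one_sub_one (a : ℂ) (n : ℕ) :
    crising ((n : ℂ) + 1) (a - 1) = Gamma (a + n) / n ! := by
  rw [← Gamma_nat_eq_factorial, crising]
  split_ifs with h
  · have hΓ : Gamma ((n : ℂ) + 1) ≠ 0 := by
      rw [Gamma_nat_eq_factorial]
      exact_mod_cast n.factorial_ne_zero
    rw [sub_eq_zero.mp h, add_comm, div_self hΓ]
  · congr 2
    ring

theorem Complex.hasSum_Gamma_div_factorial_mul_pow {a w : ℂ} (ha : ∀ k : ℕ, a ≠ -k)
    (hw : ‖w‖ < 1) :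
    HasSum (fun n : ℕ => Gamma (a + n) / n ! * w ^ n) (Gamma a / (1 - w) ^ a) := by
  have hw' : w ∈ Metric.eball (0 : ℂ) 1 := by
    rw [Metric.mem_eball, edist_zero_right, ← ofReal_norm]
    exact ENNReal.ofReal_lt_one.mpr hw
  have h := ((one_div_one_sub_cpow_hasFPowerSeriesOnBall_zero a).hasSum hw').mul_left (Gamma a)
  simp only [FormalMultilinearSeries.ofScalars_apply_eq, smul_eq_mul, zero_add] at h
  simpa [← mul_assoc, Gamma_mul_choose_add_sub_one ha, div_eq_mul_inv] using h

/-- For `μ > 0` and `|1-z| < 1`, the nabla discrete Laplace transform of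
`t^{\overline{μ-1}}` equals `Γ(μ)/z^μ`:
`∑_{t=1}^{∞} (1-z)^{t-1} t^{\overline{μ-1}} = Γ(μ)/z^μ` (here `t = n + 1`). -/
theorem laplace_rising (μ : ℝ) (hμ : 0 < μ) (z : ℂ) (hz : ‖1 - z‖ < 1) :
    HasSum (fun n : ℕ => (1 - z) ^ n * crising ((n : ℂ) + 1) ((μ : ℂ) - 1))
      (Complex.Gamma (μ : ℂ) / z ^ (μ : ℂ)) := by
  have hμ' : ∀ k : ℕ, (μ : ℂ) ≠ -k := fun k h => by
    have : μ = -k := by exact_mod_cast h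
    linarith [k.cast_nonneg (α := ℝ)]
  simpa only [crising_nat_add_one_sub_one, mul_comm, sub_sub_cancel] using
    hasSum_Gamma_div_factorial_mul_pow hμ' hz
end

section
/- For μ > 0, b > 0, and |1-z| < b, the nabla discrete Laplace transform of t^{\overline{μ-1}} b^{-t} equals b^{μ-1}Γ(μ)/(z+b-1)^μ, i.e., ∑_{t=1}^{∞} (1-z)^{t-1} t^{\overline{μ-1}} b^{-t} = b^{μ-1}Γ(μ)/(z+b-1)^μ. -/
open Complex
open scoped Nat

namespace Complex

lemma Gamma_add_nat_div_factorial {s : ℂ} (hs : ∀ k : ℕ, s ≠ -k) (n : ℕ) :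
    Gamma (s + n) / n ! = Gamma s * Ring.choose (s + n - 1) n := by
  have hn : (n ! : ℂ) ≠ 0 := Nat.cast_ne_zero.mpr n.factorial_ne_zero
  have hchoose : (n ! : ℂ) * Ring.choose (s + n - 1) n = Gamma (s + n) / Gamma s := by
    rw [← Ring.multichoose_eq, ← nsmul_eq_mul, Ring.factorial_nsmul_multichoose_eq_ascPochhammer,
      Polynomial.ascPochhammer_smeval_eq_eval, Gamma_add_nat_div_Gamma_eq s hs]
  rw [div_eq_iff hn, mul_right_comm, mul_assoc, hchoose, mul_div_cancel₀ _ (Gamma_ne_zero hs)]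

lemma hasSum_Gamma_add_nat_div_factorial_mul_pow {s : ℂ} (hs : ∀ k : ℕ, s ≠ -k) {w : ℂ}
    (hw : ‖w‖ < 1) :
    HasSum (fun n : ℕ => Gamma (s + n) / n ! * w ^ n) (Gamma s / (1 - w) ^ s) := by
  have hw' : w ∈ Metric.eball (0 : ℂ) 1 := by
    rw [Metric.mem_eball, edist_zero_right, enorm_eq_nnnorm]
    exact_mod_cast hw
  have := ((one_div_one_sub_cpow_hasFPowerSeriesOnBall_zero s).hasSum hw').mul_left (Gamma s)
  simpa [Gamma_add_nat_div_factorial hs, FormalMultilinearSeries.ofScalars_apply_eq, mul_assoc,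
    mul_comm (w ^ _), div_eq_mul_inv] using this

lemma div_ofReal_cpow {r : ℝ} (hr : 0 < r) {x : ℂ} (hx : x ≠ 0) (s : ℂ) :
    (x / r) ^ s = x ^ s / (r : ℂ) ^ s := by
  have hr' : (r : ℂ) ≠ 0 := ofReal_ne_zero.mpr hr.ne'
  rw [cpow_def_of_ne_zero (div_ne_zero hx hr'), cpow_def_of_ne_zero hx, cpow_def_of_ne_zero hr',
    div_eq_mul_inv, ← ofReal_inv, log_mul_ofReal _ (inv_pos.mpr hr) x hx, Real.log_inv,
    ← ofReal_log hr.le, ofReal_neg, ← exp_sub]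
  congr 1
  ring

lemma hasSum_Gamma_add_nat_div_factorial_mul_pow_div_pow {s : ℂ} (hs : ∀ k : ℕ, s ≠ -k)
    {b : ℝ} (hb : 0 < b) {x : ℂ} (hx : ‖x‖ < b) :
    HasSum (fun n : ℕ => Gamma (s + n) / n ! * x ^ n / (b : ℂ) ^ (n + 1))
      ((b : ℂ) ^ (s - 1) * Gamma s / (b - x) ^ s) := by
  have hb' : (b : ℂ) ≠ 0 := ofReal_ne_zero.mpr hb.ne'
  have hbx : (b : ℂ) - x ≠ 0 := by
    refine sub_ne_zero.mpr fun h => hx.not_ge ?_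
    rw [← h, norm_real, Real.norm_of_nonneg hb.le]
  have hw : ‖x / b‖ < 1 := by
    rwa [norm_div, norm_real, Real.norm_of_nonneg hb.le, div_lt_one hb]
  have hval : Gamma s / (1 - x / b) ^ s / b = (b : ℂ) ^ (s - 1) * Gamma s / (b - x) ^ s := by
    rw [one_sub_div hb', div_ofReal_cpow hb hbx, cpow_sub _ _ hb', cpow_one]
    field_simp
  refine hval ▸ ((hasSum_Gamma_add_nat_div_factorial_mul_pow hs hw).div_const (b : ℂ)).congr_fun
    fun n => ?_
  rw [div_pow, pow_succ]
  field_simp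

end Complex

lemma crising_natCast_add_one_sub_one (s : ℂ) (n : ℕ) :
    crising ((n : ℂ) + 1) (s - 1) = Gamma (s + n) / n ! := by
  have hfac : Gamma ((n : ℂ) + 1) = n ! := by exact_mod_cast Gamma_nat_eq_factorial n
  rw [crising, hfac]
  split_ifs with h
  · rw [sub_eq_zero.mp h, add_comm, hfac,
      div_self (Nat.cast_ne_zero.mpr n.factorial_ne_zero)]
  · rw [show (n : ℂ) + 1 + (s - 1) = s + n by ring]

/-- For `μ > 0`, `b > 0` and `|1-z| < b`, the nabla discrete Laplace transform of
`t^{\overline{μ-1}} b^{-t}` equals `b^{μ-1}Γ(μ)/(z+b-1)^μ` (here `t = n + 1`). -/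
theorem laplace_rising_exp (μ b : ℝ) (hμ : 0 < μ) (hb : 0 < b) (z : ℂ)
    (hz : ‖1 - z‖ < b) :
    HasSum (fun n : ℕ =>
        (1 - z) ^ n * crising ((n : ℂ) + 1) ((μ : ℂ) - 1) * (b : ℂ) ^ (-((n : ℂ) + 1)))
      ((b : ℂ) ^ ((μ : ℂ) - 1) * Complex.Gamma (μ : ℂ) / (z + (b : ℂ) - 1) ^ (μ : ℂ)) := by
  have hμ' : ∀ k : ℕ, (μ : ℂ) ≠ -k := fun k h => by
    have := congrArg re h
    simp only [ofReal_re, neg_re, natCast_re] at this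
    linarith [k.cast_nonneg (α := ℝ)]
  have hsum := hasSum_Gamma_add_nat_div_factorial_mul_pow_div_pow hμ' hb hz
  rw [show (b : ℂ) - (1 - z) = z + b - 1 by ring] at hsum
  refine hsum.congr_fun fun n => ?_
  rw [crising_natCast_add_one_sub_one, cpow_neg,
    show (n : ℂ) + 1 = ((n + 1 : ℕ) : ℂ) by push_cast; rfl, cpow_natCast]
  ring
end

section
/- The nabla discrete Laplace transform takes convolution to product: for functions f, g defined on ℕ_a, (K_a(f * g))(s) = (K_a f)(s) · (K_a g)(s), whenever both transforms converge absolutely. -/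
/-!
Indexed over the antidiagonal, the weighted convolution `(1 - z)^n (f * g)(n + 1)` is the `n`-th
term of the Cauchy product of the two transform series, because `(1 - z)^n = (1 - z)^i (1 - z)^j`
for `i + j = n`. Absolute convergence of both series makes their Cauchy product sum to the product.
-/

/-- The nabla discrete convolution of `f, g : ℕ_a → ℝ` (as sequences, `f j = f(a+j)`):
`(f * g)(v) = ∑_{s=a+1}^{v} g(v - s + 1 + a) f(s)`, at the point `v = a + m`. -/
def nablaConv (f g : ℕ → ℝ) (m : ℕ) : ℝ :=
  ∑ j ∈ Finset.Icc 1 m, g (m - j + 1) * f j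

open Finset

theorem nablaConv_succ (f g : ℕ → ℝ) (n : ℕ) :
    nablaConv f g (n + 1) = ∑ p ∈ antidiagonal n, f (p.1 + 1) * g (p.2 + 1) := by
  rw [Nat.sum_antidiagonal_eq_sum_range_succ (fun i j => f (i + 1) * g (j + 1)), nablaConv,
    ← Ico_add_one_right_eq_Icc, sum_Ico_eq_sum_range, Nat.add_sub_cancel]
  refine sum_congr rfl fun k hk => ?_
  rw [mem_range] at hk
  rw [mul_comm, add_comm 1 k]
  congr 2
  omega

theorem pow_mul_sum_antidiagonal {R : Type*} [CommSemiring R] (x : R) (a b : ℕ → R) (n : ℕ) :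
    x ^ n * ∑ p ∈ antidiagonal n, a p.1 * b p.2
      = ∑ p ∈ antidiagonal n, x ^ p.1 * a p.1 * (x ^ p.2 * b p.2) := by
  rw [mul_sum]
  refine sum_congr rfl fun p hp => ?_
  rw [← mem_antidiagonal.mp hp, pow_add]
  ring

/-- `(K_a f)(z) = ∑_{t=a+1}^∞ (1-z)^{t-a-1} f(t)` is written with `t = a + n + 1`. -/
theorem laplace_nablaConv (z : ℝ) (f g : ℕ → ℝ)
    (hf : Summable (fun n : ℕ => |(1 - z) ^ n * f (n + 1)|))
    (hg : Summable (fun n : ℕ => |(1 - z) ^ n * g (n + 1)|)) :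
    (∑' n : ℕ, (1 - z) ^ n * nablaConv f g (n + 1))
      = (∑' n : ℕ, (1 - z) ^ n * f (n + 1)) * (∑' n : ℕ, (1 - z) ^ n * g (n + 1)) := by
  rw [tsum_mul_tsum_eq_tsum_sum_antidiagonal_of_summable_norm
    (by simpa only [Real.norm_eq_abs] using hf) (by simpa only [Real.norm_eq_abs] using hg)]
  refine tsum_congr fun n => ?_
  rw [nablaConv_succ, pow_mul_sum_antidiagonal _ (fun i => f (i + 1)) (fun j => g (j + 1))]
end

section
/- Integration by parts for nabla fractional sums: for α > 0 and a < b with a ≡ b mod 1, and functions f on ℕ_a, g on _bℕ, we have ∑_{s=a+1}^{b-1} g(s)·(ₐ∇^{-α}f)(s) = ∑_{s=a+1}^{b-1} f(s)·(∇_b^{-α}g)(s). -/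
open Finset

def causalConv {R : Type*} [CommSemiring R] (K f : ℕ → R) (n : ℕ) : R :=
  ∑ k ∈ Icc 1 n, K (n - k) * f k

theorem sum_reflect_mul_causalConv {R : Type*} [CommSemiring R] (K f g : ℕ → R) (N : ℕ) :
    ∑ j ∈ Icc 1 (N - 1), g (N - j) * causalConv K f j
      = ∑ k ∈ Icc 1 (N - 1), f k * causalConv K g (N - k) := by
  simp only [causalConv, mul_sum]
  rw [sum_comm' (s' := fun k => Icc k (N - 1)) (t' := Icc 1 (N - 1))
    (by intro j k; simp only [mem_Icc]; omega)]
  refine sum_congr rfl fun k hk => ?_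
  rw [mem_Icc] at hk
  refine sum_nbij' (fun j => N - j) (fun i => N - i) ?_ ?_ ?_ ?_ ?_
  · intro j hj; simp only [mem_Icc] at hj ⊢; omega
  · intro i hi; simp only [mem_Icc] at hi ⊢; omega
  · intro j hj; simp only [mem_Icc] at hj; omega
  · intro i hi; simp only [mem_Icc] at hi; omega
  · intro j hj
    rw [mem_Icc] at hj
    rw [show N - k - (N - j) = j - k by omega]
    ring

theorem nablaSumR_eq_nablaSumL : nablaSumR = nablaSumL := rfl

theorem nablaSumL_eq_causalConv {α : ℝ} (hα : α ≠ 0) (f : ℕ → ℝ) :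
    nablaSumL α f = causalConv (fun d => rising (d + 1) (α - 1) / Real.Gamma α) f := by
  funext n
  simp only [nablaSumL, causalConv, if_neg hα, mul_sum]
  refine sum_congr rfl fun k hk => ?_
  rw [Nat.cast_sub (mem_Icc.mp hk).2]
  ring

/-- In the encoding `b - a = N`, the value `g(a + j)` is the sequence entry `g (N - j)`. -/
theorem nablaSum_by_parts_general (α : ℝ) (N : ℕ) (f g : ℕ → ℝ) :
    (∑ j ∈ Finset.Icc 1 (N - 1), g (N - j) * nablaSumL α f j)
      = ∑ j ∈ Finset.Icc 1 (N - 1), f j * nablaSumR α g (N - j) := by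
  rw [nablaSumR_eq_nablaSumL]
  by_cases hα : α = 0
  · simp only [nablaSumL, if_pos hα, mul_comm]
  · simp only [nablaSumL_eq_causalConv hα]
    exact sum_reflect_mul_causalConv _ f g N

/-- Integration by parts for nabla fractional sums: for `α > 0` and `a < b` with
`b - a = N ∈ ℕ`, functions `f` on `ℕ_a` (sequence `f j = f(a+j)`) and `g` on
`_bℕ` (sequence `g i = g(b-i)`, so `g(a+j) = g (N-j)` as sequences):
`∑_{s=a+1}^{b-1} g(s) (ₐ∇^{-α}f)(s) = ∑_{s=a+1}^{b-1} f(s) (∇_b^{-α}g)(s)`. -/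
theorem nablaSum_by_parts (α : ℝ) (hα : 0 < α) (N : ℕ) (hN : 1 ≤ N) (f g : ℕ → ℝ) :
    (∑ j ∈ Finset.Icc 1 (N - 1), g (N - j) * nablaSumL α f j)
      = ∑ j ∈ Finset.Icc 1 (N - 1), f j * nablaSumR α g (N - j) :=
  nablaSum_by_parts_general α N f g
end
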